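/- Let n, n1 ≥ 1, m1, m2 ≥ 0 with m1+m2 ≥ 1, r ≥ 0, let d0 ∈ U(n; 2^{m1} 3^{m2}), d1 ∈ U(n1; 2^{m1} 3^{m2}), let d2 be any n1×r matrix with entries in {1,2}, and let D3 be the corresponding column augmented design. Then WD(D3) = C(r) + (n²/(n+n1)²)·(3/2)^r·WD(d0) + (1/(n+n1)²)·(5/4)^{m1}·(23/18)^{m2+r}·( Σ_{i,j follow-up rows, i ≠ j} (6/5)^{F_{ij}}·(27/23)^{V_{ij}+T_{ij}} + 2·Σ_{i initial row, j follow-up row} (6/5)^{F_{ij}}·(27/23)^{V_{ij}} ), where the first sum runs over all ordered pairs of distinct follow-up rows and the second over all pairs with i an initial row and j a follow-up row. -/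

import Mathlib

open Finset

noncomputable section

namespace CAUD

/-- The mapped point value `u = (2x+1)/(2q)`. -/
def uVal (q x : ℕ) : ℝ := (2 * (x : ℝ) + 1) / (2 * (q : ℝ))

/-- The squared wrap-around L2-discrepancy of an `N × M` design whose `k`-th
column takes values in `{0, …, q k - 1}`. -/
def WD {N M : ℕ} (q : Fin M → ℕ) (x : Fin N → Fin M → ℕ) : ℝ :=
  -((4 : ℝ) / 3) ^ M + (1 / (N : ℝ) ^ 2) *
    ∑ i : Fin N, ∑ j : Fin N, ∏ k : Fin M,
      ((3 : ℝ) / 2 - |uVal (q k) (x i k) - uVal (q k) (x j k)| *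
        (1 - |uVal (q k) (x i k) - uVal (q k) (x j k)|))

/-- A mixed-level U-type design in `U(N; 2^{m1} 3^{m2})`: the first `m1` columns are
two-level and balanced, the last `m2` columns are three-level and balanced. -/
def IsUType (N m1 m2 : ℕ) (d : Fin N → Fin (m1 + m2) → ℕ) : Prop :=
  ∀ k : Fin (m1 + m2),
    if (k : ℕ) < m1 then
      (∀ i, d i k < 2) ∧ ∀ v < 2, 2 * (univ.filter (fun i => d i k = v)).card = N
    else
      (∀ i, d i k < 3) ∧ ∀ v < 3, 3 * (univ.filter (fun i => d i k = v)).card = N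

/-- A column-balanced `n1 × r` matrix with entries in `{1, 2}`: every column has
exactly `n1/2` entries equal to 1 and `n1/2` entries equal to 2. -/
def IsBalanced (n1 r : ℕ) (d2 : Fin n1 → Fin r → ℕ) : Prop :=
  (∀ i k, d2 i k = 1 ∨ d2 i k = 2) ∧
  ∀ k, 2 * (univ.filter (fun i => d2 i k = 1)).card = n1 ∧
       2 * (univ.filter (fun i => d2 i k = 2)).card = n1

/-- The column augmented design: first `n` rows are `(d0, 0)`, last `n1` rows `(d1, d2)`. -/
def augDesign (n n1 m r : ℕ) (d0 : Fin n → Fin m → ℕ) (d1 : Fin n1 → Fin m → ℕ)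
    (d2 : Fin n1 → Fin r → ℕ) : Fin (n + n1) → Fin (m + r) → ℕ := fun i k =>
  if hi : (i : ℕ) < n then
    if hk : (k : ℕ) < m then d0 ⟨i, hi⟩ ⟨k, hk⟩ else 0
  else
    if hk : (k : ℕ) < m then d1 ⟨(i : ℕ) - n, by have := i.isLt; omega⟩ ⟨k, hk⟩
    else d2 ⟨(i : ℕ) - n, by have := i.isLt; omega⟩ ⟨(k : ℕ) - m, by have := k.isLt; omega⟩

/-- Append one blocking column: 0 on the initial rows, 1 on the follow-up rows. -/
def appendOne (n n1 M : ℕ) (D : Fin (n + n1) → Fin M → ℕ) :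
    Fin (n + n1) → Fin (M + 1) → ℕ := fun i k =>
  if hk : (k : ℕ) < M then D i ⟨k, hk⟩ else if (i : ℕ) < n then 0 else 1

/-- Append two blocking columns: the first is 0 on the initial rows and 1 on the
follow-up rows; the second is 0 on the initial rows and the first `n1/2` follow-up
rows, and 1 on the remaining follow-up rows. -/
def appendTwo (n n1 M : ℕ) (D : Fin (n + n1) → Fin M → ℕ) :
    Fin (n + n1) → Fin (M + 2) → ℕ := fun i k =>
  if hk : (k : ℕ) < M then D i ⟨k, hk⟩
  else if (k : ℕ) = M then (if (i : ℕ) < n then 0 else 1)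
  else (if (i : ℕ) < n + n1 / 2 then 0 else 1)

/-- Level sizes of the (possibly blocking-augmented) column augmented design:
first `m1` columns are two-level, the next `m2 + r` are three-level, anything
after that (blocking columns) is two-level. -/
def qfun (m1 m2 r k : ℕ) : ℕ :=
  if k < m1 then 2 else if k < m1 + m2 + r then 3 else 2

/-- Coincidence number among the first `m1` columns. -/
def Fco {N M : ℕ} (m1 : ℕ) (D : Fin N → Fin M → ℕ) (i j : Fin N) : ℕ :=
  (univ.filter (fun k : Fin M => (k : ℕ) < m1 ∧ D i k = D j k)).card

/-- Coincidence number among columns `m1, …, m1 + m2 - 1`. -/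
def Vco {N M : ℕ} (m1 m2 : ℕ) (D : Fin N → Fin M → ℕ) (i j : Fin N) : ℕ :=
  (univ.filter (fun k : Fin M => m1 ≤ (k : ℕ) ∧ (k : ℕ) < m1 + m2 ∧ D i k = D j k)).card

/-- Coincidence number among the columns `≥ m`, counting agreements with common
value in `{1, 2}`. -/
def Tco {N M : ℕ} (m : ℕ) (D : Fin N → Fin M → ℕ) (i j : Fin N) : ℕ :=
  (univ.filter (fun k : Fin M =>
    m ≤ (k : ℕ) ∧ D i k = D j k ∧ (D i k = 1 ∨ D i k = 2))).card

/-- Total coincidence number between two rows. -/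
def lam {N M : ℕ} (D : Fin N → Fin M → ℕ) (i j : Fin N) : ℕ :=
  (univ.filter (fun k : Fin M => D i k = D j k)).card

/-- Number of rows whose `k`-th entry is `u` and whose `l`-th entry is `v`. -/
def nuv {N M : ℕ} (d : Fin N → Fin M → ℕ) (k l : Fin M) (u v : ℕ) : ℕ :=
  (univ.filter (fun i : Fin N => d i k = u ∧ d i l = v)).card

/-- Non-orthogonality of a pair of columns. -/
def fNOD {N M : ℕ} (q : Fin M → ℕ) (d : Fin N → Fin M → ℕ) (k l : Fin M) : ℝ :=
  ∑ u ∈ Finset.range (q k), ∑ v ∈ Finset.range (q l),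
    ((nuv d k l u v : ℝ) - (N : ℝ) / ((q k : ℝ) * (q l : ℝ))) ^ 2

/-- The `E(f_NOD)` criterion: average non-orthogonality over all pairs of columns. -/
def EfNOD {N M : ℕ} (q : Fin M → ℕ) (d : Fin N → Fin M → ℕ) : ℝ :=
  (∑ k : Fin M, ∑ l : Fin M, if (k : ℕ) < (l : ℕ) then fNOD q d k l else 0) /
    (Nat.choose M 2 : ℝ)

/-- Stacking the stage designs `d 0, …, d (l-1)` on top of one another. -/
def stack (M : ℕ) (ns : ℕ → ℕ) (d : (j : ℕ) → Fin (ns j) → Fin M → ℕ) :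
    (l : ℕ) → Fin (∑ j ∈ Finset.range l, ns j) → Fin M → ℕ
  | 0 => fun _ _ => 0
  | l + 1 => fun i =>
    let i' : Fin ((∑ j ∈ Finset.range l, ns j) + ns l) :=
      Fin.cast (Finset.sum_range_succ ns l) i
    if h : (i' : ℕ) < ∑ j ∈ Finset.range l, ns j then
      stack M ns d l ⟨(i' : ℕ), h⟩
    else d l ⟨(i' : ℕ) - ∑ j ∈ Finset.range l, ns j, by have := i'.isLt; omega⟩

def aa : ℝ := Real.log (6 / 5)

def bb : ℝ := Real.log (27 / 23)

/-- The constant `C(s)`. -/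
def Cconst (n n1 m s : ℕ) : ℝ :=
  -(((4 : ℝ) / 3) ^ s - ((n : ℝ) ^ 2 / ((n : ℝ) + n1) ^ 2) * ((3 : ℝ) / 2) ^ s) * ((4 : ℝ) / 3) ^ m
  + ((n1 : ℝ) / ((n : ℝ) + n1) ^ 2) * ((3 : ℝ) / 2) ^ (m + s)

def phi1 (n1 m1 m2 r : ℕ) : ℝ :=
  aa * m1 * ((n1 : ℝ) - 2) / (2 * ((n1 : ℝ) - 1)) + bb * m2 * ((n1 : ℝ) - 3) / (3 * ((n1 : ℝ) - 1))
  + bb * r * ((n1 : ℝ) - 2) / (2 * ((n1 : ℝ) - 1))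

def phi2 (m1 m2 : ℕ) : ℝ := aa * m1 / 2 + bb * m2 / 3

def T1c (n1 m1 m2 r : ℕ) : ℝ := (n1 : ℝ) * ((n1 : ℝ) - 1) * Real.exp (phi1 n1 m1 m2 r)

def T2c (n n1 m1 m2 : ℕ) : ℝ := (n : ℝ) * (n1 : ℝ) * Real.exp (phi2 m1 m2)

/-- Lower bound `LBW3` (mixed-level case, Theorem 1). -/
def LBW3 (n n1 m1 m2 r : ℕ) (wd0 : ℝ) : ℝ :=
  Cconst n n1 (m1 + m2) r + ((n : ℝ) ^ 2 / ((n : ℝ) + n1) ^ 2) * ((3 : ℝ) / 2) ^ r * wd0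
  + (1 / ((n : ℝ) + n1) ^ 2) * ((5 : ℝ) / 4) ^ m1 * ((23 : ℝ) / 18) ^ (m2 + r) *
      (T1c n1 m1 m2 r + 2 * T2c n n1 m1 m2)

def phi1p (n1 m r : ℕ) : ℝ :=
  aa * m * ((n1 : ℝ) - 2) / (2 * ((n1 : ℝ) - 1)) + bb * r * ((n1 : ℝ) - 2) / (2 * ((n1 : ℝ) - 1))

def T1pc (n1 m r : ℕ) : ℝ := (n1 : ℝ) * ((n1 : ℝ) - 1) * Real.exp (phi1p n1 m r)

def w1 (m : ℕ) : ℕ := m / 2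

def q1c (n n1 m : ℕ) : ℝ := (m : ℝ) * n * n1 / 2 - (n : ℝ) * n1 * (w1 m : ℝ)

def p1c (n n1 m : ℕ) : ℝ := (n : ℝ) * n1 - q1c n n1 m

/-- Lower bound `LBW3` for a two-level initial design (Theorem 2). -/
def LBW32 (n n1 m r : ℕ) (wd0 : ℝ) : ℝ :=
  Cconst n n1 m r + ((n : ℝ) ^ 2 / ((n : ℝ) + n1) ^ 2) * ((3 : ℝ) / 2) ^ r * wd0
  + (1 / ((n : ℝ) + n1) ^ 2) * ((5 : ℝ) / 4) ^ m * ((23 : ℝ) / 18) ^ r *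
      (T1pc n1 m r + 2 * (p1c n n1 m * ((6 : ℝ) / 5) ^ w1 m + q1c n n1 m * ((6 : ℝ) / 5) ^ (w1 m + 1)))

def w2 (n1 m r : ℕ) : ℤ :=
  ⌊(m : ℝ) * ((n1 : ℝ) - 3) / (3 * ((n1 : ℝ) - 1)) + (r : ℝ) * ((n1 : ℝ) - 2) / (2 * ((n1 : ℝ) - 1))⌋

def q2c (n1 m r : ℕ) : ℝ :=
  (m : ℝ) * n1 * ((n1 : ℝ) - 3) / 3 + (r : ℝ) * n1 * ((n1 : ℝ) - 2) / 2
  - (n1 : ℝ) * ((n1 : ℝ) - 1) * (w2 n1 m r : ℝ)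

def p2c (n1 m r : ℕ) : ℝ := (n1 : ℝ) * ((n1 : ℝ) - 1) - q2c n1 m r

def w3 (m : ℕ) : ℕ := m / 3

def q3c (n n1 m : ℕ) : ℝ := (m : ℝ) * n * n1 / 3 - (n : ℝ) * n1 * (w3 m : ℝ)

def p3c (n n1 m : ℕ) : ℝ := (n : ℝ) * n1 - q3c n n1 m

/-- Lower bound `LBW3` for a three-level initial design (Theorem 3). -/
def LBW33 (n n1 m r : ℕ) (wd0 : ℝ) : ℝ :=
  Cconst n n1 m r + ((n : ℝ) ^ 2 / ((n : ℝ) + n1) ^ 2) * ((3 : ℝ) / 2) ^ r * wd0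
  + (1 / ((n : ℝ) + n1) ^ 2) * ((23 : ℝ) / 18) ^ (m + r) *
      (p2c n1 m r * ((27 : ℝ) / 23) ^ w2 n1 m r + q2c n1 m r * ((27 : ℝ) / 23) ^ (w2 n1 m r + 1)
       + 2 * (p3c n n1 m * ((27 : ℝ) / 23) ^ w3 m + q3c n n1 m * ((27 : ℝ) / 23) ^ (w3 m + 1)))

/-- Lower bound of Theorem 4 for a mixed-level initial design. -/
def LBW3b1 (n n1 m1 m2 r : ℕ) (wd0 : ℝ) : ℝ :=
  Cconst n n1 (m1 + m2) (r + 1) + ((n : ℝ) ^ 2 / ((n : ℝ) + n1) ^ 2) * ((3 : ℝ) / 2) ^ (r + 1) * wd0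
  + (1 / ((n : ℝ) + n1) ^ 2) * ((5 : ℝ) / 4) ^ m1 * ((23 : ℝ) / 18) ^ (m2 + r) *
      ((3 : ℝ) / 2 * T1c n1 m1 m2 r + 2 * ((5 : ℝ) / 4) * T2c n n1 m1 m2)

/-- Lower bound of Theorem 4 for a two-level initial design. -/
def LBW3b2 (n n1 m r : ℕ) (wd0 : ℝ) : ℝ :=
  Cconst n n1 m (r + 1) + ((n : ℝ) ^ 2 / ((n : ℝ) + n1) ^ 2) * ((3 : ℝ) / 2) ^ (r + 1) * wd0
  + (1 / ((n : ℝ) + n1) ^ 2) * ((5 : ℝ) / 4) ^ m * ((23 : ℝ) / 18) ^ r *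
      ((3 : ℝ) / 2 * T1pc n1 m r +
        2 * ((5 : ℝ) / 4) * (p1c n n1 m * ((6 : ℝ) / 5) ^ w1 m + q1c n n1 m * ((6 : ℝ) / 5) ^ (w1 m + 1)))

/-- Lower bound of Theorem 4 for a three-level initial design. -/
def LBW3b3 (n n1 m r : ℕ) (wd0 : ℝ) : ℝ :=
  Cconst n n1 m (r + 1) + ((n : ℝ) ^ 2 / ((n : ℝ) + n1) ^ 2) * ((3 : ℝ) / 2) ^ (r + 1) * wd0
  + (1 / ((n : ℝ) + n1) ^ 2) * ((23 : ℝ) / 18) ^ (m + r) *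
      ((3 : ℝ) / 2 * (p2c n1 m r * ((27 : ℝ) / 23) ^ w2 n1 m r
                      + q2c n1 m r * ((27 : ℝ) / 23) ^ (w2 n1 m r + 1))
       + 2 * ((5 : ℝ) / 4) * (p3c n n1 m * ((27 : ℝ) / 23) ^ w3 m
                              + q3c n n1 m * ((27 : ℝ) / 23) ^ (w3 m + 1)))

def phi1B (n1 m1 m2 r : ℕ) : ℝ :=
  aa * ((m1 : ℝ) + 1) * ((n1 : ℝ) - 2) / (2 * ((n1 : ℝ) - 1))
  + bb * m2 * ((n1 : ℝ) - 3) / (3 * ((n1 : ℝ) - 1))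
  + bb * r * ((n1 : ℝ) - 2) / (2 * ((n1 : ℝ) - 1))

def phi2B (m1 m2 : ℕ) : ℝ := aa * ((m1 : ℝ) + 1) / 2 + bb * m2 / 3

def T1Bc (n1 m1 m2 r : ℕ) : ℝ := (n1 : ℝ) * ((n1 : ℝ) - 1) * Real.exp (phi1B n1 m1 m2 r)

def T2Bc (n n1 m1 m2 : ℕ) : ℝ := (n : ℝ) * (n1 : ℝ) * Real.exp (phi2B m1 m2)

/-- Lower bound `LBW3B` (Theorem 5). -/
def LBW3B (n n1 m1 m2 r : ℕ) (wd0 : ℝ) : ℝ :=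
  Cconst n n1 (m1 + m2) (r + 2) + ((n : ℝ) ^ 2 / ((n : ℝ) + n1) ^ 2) * ((3 : ℝ) / 2) ^ (r + 2) * wd0
  + (1 / ((n : ℝ) + n1) ^ 2) * ((5 : ℝ) / 4) ^ (m1 + 1) * ((23 : ℝ) / 18) ^ (m2 + r) *
      ((3 : ℝ) / 2 * T1Bc n1 m1 m2 r + 2 * ((5 : ℝ) / 4) * T2Bc n n1 m1 m2)

def psi1 (n1 m1 m2 r : ℕ) : ℤ :=
  ⌊((m1 : ℝ) * ((n1 : ℝ) - 2) / 2 + (m2 : ℝ) * ((n1 : ℝ) - 3) / 3 + (r : ℝ) * ((n1 : ℝ) - 2) / 2) /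
      ((n1 : ℝ) - 1)⌋

def eta1 (n1 m1 m2 r : ℕ) : ℝ :=
  (m1 : ℝ) * n1 * ((n1 : ℝ) - 2) / 2 + (m2 : ℝ) * n1 * ((n1 : ℝ) - 3) / 3
  + (r : ℝ) * n1 * ((n1 : ℝ) - 2) / 2 - (n1 : ℝ) * ((n1 : ℝ) - 1) * (psi1 n1 m1 m2 r : ℝ)

def zeta1 (n1 m1 m2 r : ℕ) : ℝ := (n1 : ℝ) * ((n1 : ℝ) - 1) - eta1 n1 m1 m2 r

def psi2 (m1 m2 : ℕ) : ℤ := ⌊(m1 : ℝ) / 2 + (m2 : ℝ) / 3⌋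

def eta2 (n n1 m1 m2 : ℕ) : ℝ :=
  (m1 : ℝ) * n * n1 / 2 + (m2 : ℝ) * n * n1 / 3 - (n : ℝ) * n1 * (psi2 m1 m2 : ℝ)

def zeta2 (n n1 m1 m2 : ℕ) : ℝ := (n : ℝ) * n1 - eta2 n n1 m1 m2

def Q1c (n1 m1 m2 r : ℕ) : ℝ :=
  zeta1 n1 m1 m2 r * (psi1 n1 m1 m2 r : ℝ) ^ 2 + eta1 n1 m1 m2 r * ((psi1 n1 m1 m2 r : ℝ) + 1) ^ 2

def Q1pc (n1 m1 m2 r : ℕ) : ℝ :=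
  zeta1 n1 m1 m2 r * ((psi1 n1 m1 m2 r : ℝ) + 1) ^ 2 + eta1 n1 m1 m2 r * ((psi1 n1 m1 m2 r : ℝ) + 2) ^ 2

def Q2c (n n1 m1 m2 : ℕ) : ℝ :=
  zeta2 n n1 m1 m2 * (psi2 m1 m2 : ℝ) ^ 2 + eta2 n n1 m1 m2 * ((psi2 m1 m2 : ℝ) + 1) ^ 2

/-- Lower bound `LBf3` for `E(f_NOD)` of the column augmented design. -/
def LBf3 (n n1 m1 m2 r : ℕ) (ef0 : ℝ) : ℝ :=
  ((m1 : ℝ) + m2) * ((m1 : ℝ) + m2 - 1) / (((m1 : ℝ) + m2 + r) * ((m1 : ℝ) + m2 + r - 1)) * ef0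
  + 1 / (((m1 : ℝ) + m2 + r) * ((m1 : ℝ) + m2 + r - 1)) * (Q1c n1 m1 m2 r + 2 * Q2c n n1 m1 m2)
  + ((n : ℝ) + n1) * ((m1 : ℝ) + m2 + r) / ((m1 : ℝ) + m2 + r - 1)
  - 1 / (((m1 : ℝ) + m2 + r) * ((m1 : ℝ) + m2 + r - 1)) *
    ((n : ℝ) * ((m1 : ℝ) + m2) ^ 2
      - (n : ℝ) ^ 2 * (((m1 : ℝ) + (m1 : ℝ) ^ 2) / 4 + (2 * (m2 : ℝ) + (m2 : ℝ) ^ 2) / 9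
          + (m1 : ℝ) * m2 / 3)
      - (r : ℝ) * m1 * n * ((n : ℝ) - 2)
      - 2 * (r : ℝ) * m2 * n * ((n : ℝ) - 3) / 3
      - (n : ℝ) * ((n : ℝ) - 1) * (r : ℝ) ^ 2
      + (r : ℝ) * ((n : ℝ) ^ 2 + (n1 : ℝ) ^ 2 / 2)
      + ((m1 : ℝ) / 2 + (m2 : ℝ) / 3 + (m1 : ℝ) * ((m1 : ℝ) - 1) / 4
          + ((m2 : ℝ) + r) * ((m2 : ℝ) + r - 1) / 9 + (m1 : ℝ) * ((m2 : ℝ) + r) / 3)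
        * ((n : ℝ) + n1) ^ 2)

/-- Lower bound `LBf3b` for `E(f_NOD)` of the design with one added blocking column. -/
def LBf3b (n n1 m1 m2 r : ℕ) (ef0 : ℝ) : ℝ :=
  ((m1 : ℝ) + m2) * ((m1 : ℝ) + m2 - 1) / (((m1 : ℝ) + m2 + r + 1) * ((m1 : ℝ) + m2 + r)) * ef0
  + 1 / (((m1 : ℝ) + m2 + r + 1) * ((m1 : ℝ) + m2 + r)) * (Q1pc n1 m1 m2 r + 2 * Q2c n n1 m1 m2)
  + ((n : ℝ) + n1) * ((m1 : ℝ) + m2 + r + 1) / ((m1 : ℝ) + m2 + r)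
  - 1 / (((m1 : ℝ) + m2 + r + 1) * ((m1 : ℝ) + m2 + r)) *
    ((n : ℝ) * ((m1 : ℝ) + m2) ^ 2
      - (n : ℝ) ^ 2 * (((m1 : ℝ) + (m1 : ℝ) ^ 2) / 4 + (2 * (m2 : ℝ) + (m2 : ℝ) ^ 2) / 9
          + (m1 : ℝ) * m2 / 3)
      - ((r : ℝ) + 1) * m1 * n * ((n : ℝ) - 2)
      - 2 * ((r : ℝ) + 1) * m2 * n * ((n : ℝ) - 3) / 3
      - (n : ℝ) * ((n : ℝ) - 1) * ((r : ℝ) + 1) ^ 2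
      + (r : ℝ) * ((n : ℝ) ^ 2 + (n1 : ℝ) ^ 2 / 2) + (n : ℝ) ^ 2 + (n1 : ℝ) ^ 2
      + ((m1 : ℝ) / 2 + (m2 : ℝ) / 3 + (m1 : ℝ) * ((m1 : ℝ) + 1) / 4
          + ((m2 : ℝ) + r) * ((m2 : ℝ) + r - 1) / 9 + ((m1 : ℝ) + 1) * ((m2 : ℝ) + r) / 3)
        * ((n : ℝ) + n1) ^ 2)

/-- Lower bound `LBf3B` for `E(f_NOD)` of the design with two added blocking columns. -/
def LBf3B (n n1 m1 m2 r : ℕ) (ef0 : ℝ) : ℝ :=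
  ((m1 : ℝ) + m2) * ((m1 : ℝ) + m2 - 1) / (((m1 : ℝ) + m2 + r + 2) * ((m1 : ℝ) + m2 + r + 1)) * ef0
  + 1 / (((m1 : ℝ) + m2 + r + 2) * ((m1 : ℝ) + m2 + r + 1)) *
      (Q1pc n1 (m1 + 1) m2 r + 2 * Q2c n n1 (m1 + 1) m2)
  + ((n : ℝ) + n1) * ((m1 : ℝ) + m2 + r + 2) / ((m1 : ℝ) + m2 + r + 1)
  - 1 / (((m1 : ℝ) + m2 + r + 2) * ((m1 : ℝ) + m2 + r + 1)) *
    ((n : ℝ) * ((m1 : ℝ) + m2) ^ 2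
      - (n : ℝ) ^ 2 * (((m1 : ℝ) + (m1 : ℝ) ^ 2) / 4 + (2 * (m2 : ℝ) + (m2 : ℝ) ^ 2) / 9
          + (m1 : ℝ) * m2 / 3)
      - ((r : ℝ) + 2) * m1 * n * ((n : ℝ) - 2)
      - 2 * ((r : ℝ) + 2) * m2 * n * ((n : ℝ) - 3) / 3
      - (n : ℝ) * ((n : ℝ) - 1) * ((r : ℝ) + 2) ^ 2
      + ((r : ℝ) + 2) * (n : ℝ) ^ 2 + (3 + (r : ℝ)) * (n1 : ℝ) ^ 2 / 2 + (n : ℝ) * n1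
      + ((m1 : ℝ) / 2 + (m2 : ℝ) / 3 + ((m1 : ℝ) + 2) * ((m1 : ℝ) + 1) / 4
          + ((m2 : ℝ) + r) * ((m2 : ℝ) + r - 1) / 9 + ((m1 : ℝ) + 2) * ((m2 : ℝ) + r) / 3)
        * ((n : ℝ) + n1) ^ 2)

/-!
Each factor of the wrap-around kernel only sees whether the two entries agree: it is `3/2` on
agreement and `5/4` (two levels) or `23/18` (three levels) otherwise. Hence the kernel of two rows
of `D3` is `(5/4)^m1 (23/18)^(m2+r) (6/5)^F (27/23)^(V+T)` as soon as agreements in the added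
columns have value in `{1, 2}`. Split the double sum over the rows of `D3` into blocks: on pairs of
initial rows the added columns are all `0`, giving `(3/2)^r` times the sum for `d0`; on mixed pairs
the added columns never agree, since `d2` avoids `0`; the two mixed blocks are equal by symmetry;
the diagonal contributes `n1 (3/2)^(m+r)`. Collecting the constants produces `C(r)`.
-/

theorem prod_ite_one_eq_pow_card {ι M : Type*} [Fintype ι] [CommMonoid M] (p : ι → Prop)
    [DecidablePred p] (a : M) :
    ∏ k, (if p k then a else 1) = a ^ (univ.filter p).card := by
  simp [prod_ite]

theorem sum_sum_ite_eq_mul {ι R : Type*} [Fintype ι] [NonUnitalNonAssocSemiring R]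
    (p : ι → ι → Prop) [∀ i j, Decidable (p i j)] {f g : ι → ι → R} (c : R)
    (h : ∀ i j, p i j → f i j = c * g i j) :
    ∑ i, ∑ j, (if p i j then f i j else 0) = c * ∑ i, ∑ j, if p i j then g i j else 0 := by
  simp only [mul_sum, mul_ite, mul_zero]
  exact sum_congr rfl fun i _ => sum_congr rfl fun j _ => ite_congr rfl (h i j) fun _ => rfl

theorem sum_sum_fin_add_of_symm {R : Type*} [AddCommMonoid R] {n n1 : ℕ}
    (f : Fin (n + n1) → Fin (n + n1) → R) (hf : ∀ i j, f i j = f j i) :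
    ∑ i, ∑ j, f i j =
      ∑ a : Fin n, ∑ b : Fin n, f (Fin.castAdd n1 a) (Fin.castAdd n1 b) +
        ((∑ i : Fin (n + n1), ∑ j : Fin (n + n1),
            if n ≤ (i : ℕ) ∧ n ≤ (j : ℕ) ∧ i ≠ j then f i j else 0) +
          2 • ∑ i : Fin (n + n1), ∑ j : Fin (n + n1),
            if (i : ℕ) < n ∧ n ≤ (j : ℕ) then f i j else 0) +
        ∑ b : Fin n1, f (Fin.natAdd n b) (Fin.natAdd n b) := by
  have hsplit : ∀ i j, f i j =
      (if (i : ℕ) < n ∧ (j : ℕ) < n then f i j else 0) +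
        (if n ≤ (i : ℕ) ∧ n ≤ (j : ℕ) ∧ i ≠ j then f i j else 0) +
        (if (i : ℕ) < n ∧ n ≤ (j : ℕ) then f i j else 0) +
        (if n ≤ (i : ℕ) ∧ (j : ℕ) < n then f i j else 0) +
        (if j = i ∧ n ≤ (i : ℕ) then f i j else 0) := by
    intro i j
    by_cases hij : j = i
    · subst hij
      rcases lt_or_ge (j : ℕ) n with hj | hj
      · simp [hj, Nat.not_le.mpr hj]
      · simp [hj, Nat.not_lt.mpr hj]
    · split_ifs <;> first | omega | simp_all
  have hinit : (∑ i : Fin (n + n1), ∑ j : Fin (n + n1),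
      if (i : ℕ) < n ∧ (j : ℕ) < n then f i j else 0) =
      ∑ a : Fin n, ∑ b : Fin n, f (Fin.castAdd n1 a) (Fin.castAdd n1 b) := by
    simp [Fin.sum_univ_add]
  have htranspose : (∑ i : Fin (n + n1), ∑ j : Fin (n + n1),
      if n ≤ (i : ℕ) ∧ (j : ℕ) < n then f i j else 0) =
      ∑ i : Fin (n + n1), ∑ j : Fin (n + n1),
        if (i : ℕ) < n ∧ n ≤ (j : ℕ) then f i j else 0 := by
    rw [sum_comm]
    simp only [hf, and_comm]
  have hdiag : (∑ i : Fin (n + n1), ∑ j : Fin (n + n1),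
      if j = i ∧ n ≤ (i : ℕ) then f i j else 0) =
      ∑ b : Fin n1, f (Fin.natAdd n b) (Fin.natAdd n b) := by
    simp only [ite_and, sum_ite_eq', mem_univ, if_true]
    rw [Fin.sum_univ_add, sum_eq_zero fun (a : Fin n) _ => if_neg (by simp), zero_add]
    simp
  rw [sum_congr rfl fun i _ => sum_congr rfl fun j _ => hsplit i j]
  simp only [sum_add_distrib]
  rw [hinit, htranspose, hdiag, two_nsmul]
  abel

def wdKernel (q x y : ℕ) : ℝ :=
  (3 : ℝ) / 2 - |uVal q x - uVal q y| * (1 - |uVal q x - uVal q y|)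

theorem WD_eq_sum_prod {N M : ℕ} (q : Fin M → ℕ) (x : Fin N → Fin M → ℕ) :
    WD q x = -((4 : ℝ) / 3) ^ M +
      1 / (N : ℝ) ^ 2 * ∑ i, ∑ j, ∏ k, wdKernel (q k) (x i k) (x j k) :=
  rfl

theorem sum_sum_prod_wdKernel {N M : ℕ} (q : Fin M → ℕ) (x : Fin N → Fin M → ℕ) :
    ∑ i, ∑ j, ∏ k, wdKernel (q k) (x i k) (x j k) =
      (N : ℝ) ^ 2 * (WD q x + ((4 : ℝ) / 3) ^ M) := by
  rcases Nat.eq_zero_or_pos N with rfl | hN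
  · simp
  · rw [WD_eq_sum_prod]
    field_simp
    ring

@[simp]
theorem wdKernel_self (q x : ℕ) : wdKernel q x x = 3 / 2 := by
  simp [wdKernel]

theorem wdKernel_comm (q x y : ℕ) : wdKernel q x y = wdKernel q y x := by
  simp only [wdKernel, abs_sub_comm]

theorem wdKernel_two {x y : ℕ} (hx : x < 2) (hy : y < 2) :
    wdKernel 2 x y = 5 / 4 * if x = y then 6 / 5 else 1 := by
  interval_cases x <;> interval_cases y <;> norm_num [wdKernel, uVal, abs_of_nonneg, abs_of_nonpos]

theorem wdKernel_three {x y : ℕ} (hx : x < 3) (hy : y < 3) :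
    wdKernel 3 x y = 23 / 18 * if x = y then 27 / 23 else 1 := by
  interval_cases x <;> interval_cases y <;> norm_num [wdKernel, uVal, abs_of_nonneg, abs_of_nonpos]

theorem qfun_eq_of_lt {m1 m2 k : ℕ} (hk : k < m1 + m2) (r s : ℕ) :
    qfun m1 m2 r k = qfun m1 m2 s k := by
  unfold qfun; split_ifs <;> omega

theorem IsUType.lt_qfun {N m1 m2 : ℕ} {d : Fin N → Fin (m1 + m2) → ℕ}
    (h : IsUType N m1 m2 d)
    (r : ℕ) (i : Fin N) (k : Fin (m1 + m2)) : d i k < qfun m1 m2 r k := by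
  have hk := h k
  unfold qfun
  split_ifs at hk ⊢ <;> first | exact hk.1 i | omega

theorem wdKernel_qfun {m1 m2 r : ℕ} (k : Fin (m1 + m2 + r)) {x y : ℕ}
    (hx : x < qfun m1 m2 r k) (hy : y < qfun m1 m2 r k) :
    wdKernel (qfun m1 m2 r k) x y =
      (if (k : ℕ) < m1 then 5 / 4 else 23 / 18) *
        ((if (k : ℕ) < m1 ∧ x = y then 6 / 5 else 1) *
          (if m1 ≤ (k : ℕ) ∧ (k : ℕ) < m1 + m2 ∧ x = y then 27 / 23 else 1) *
          (if m1 + m2 ≤ (k : ℕ) ∧ x = y then 27 / 23 else 1)) := by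
  by_cases h1 : (k : ℕ) < m1
  · have hq : qfun m1 m2 r k = 2 := by simp [qfun, h1]
    rw [hq] at hx hy ⊢
    rw [wdKernel_two hx hy]
    split_ifs <;> first | omega | norm_num
  · have hq : qfun m1 m2 r k = 3 := by simp [qfun, h1, k.isLt]
    rw [hq] at hx hy ⊢
    rw [wdKernel_three hx hy]
    split_ifs <;> first | omega | norm_num

theorem prod_wdKernel_qfun {N m1 m2 r : ℕ} (D : Fin N → Fin (m1 + m2 + r) → ℕ)
    (hD : ∀ i k, D i k < qfun m1 m2 r k) {i j : Fin N}
    (hT : ∀ k : Fin (m1 + m2 + r), m1 + m2 ≤ (k : ℕ) → D i k = D j k →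
      D i k = 1 ∨ D i k = 2) :
    ∏ k : Fin (m1 + m2 + r), wdKernel (qfun m1 m2 r k) (D i k) (D j k) =
      ((5 : ℝ) / 4) ^ m1 * ((23 : ℝ) / 18) ^ (m2 + r) *
        (((6 : ℝ) / 5) ^ Fco m1 D i j *
          ((27 : ℝ) / 23) ^ (Vco m1 m2 D i j + Tco (m1 + m2) D i j)) := by
  have hTco : Tco (m1 + m2) D i j =
      (univ.filter fun k : Fin (m1 + m2 + r) => m1 + m2 ≤ (k : ℕ) ∧ D i k = D j k).card := by
    unfold Tco
    congr 1
    ext k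
    simp only [mem_filter, mem_univ, true_and]
    exact ⟨fun h => ⟨h.1, h.2.1⟩, fun h => ⟨h.1, h.2, hT k h.1 h.2⟩⟩
  have hlow : (univ.filter fun k : Fin (m1 + m2 + r) => (k : ℕ) < m1).card = m1 := by
    rw [Fin.card_filter_val_lt]; omega
  have hhigh : (univ.filter fun k : Fin (m1 + m2 + r) => ¬ (k : ℕ) < m1).card = m2 + r := by
    have := card_filter_add_card_filter_not (s := univ)
      (fun k : Fin (m1 + m2 + r) => (k : ℕ) < m1)
    simp only [card_univ, Fintype.card_fin, hlow] at this
    omega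
  rw [prod_congr rfl fun k _ => wdKernel_qfun k (hD i k) (hD j k), prod_mul_distrib,
    prod_mul_distrib, prod_mul_distrib, prod_ite, prod_const, prod_const, hlow, hhigh,
    prod_ite_one_eq_pow_card, prod_ite_one_eq_pow_card, prod_ite_one_eq_pow_card, hTco]
  unfold Fco Vco
  ring

section AugmentedDesign

variable {n n1 m r : ℕ} (d0 : Fin n → Fin m → ℕ) (d1 : Fin n1 → Fin m → ℕ)
  (d2 : Fin n1 → Fin r → ℕ)

@[simp]
theorem augDesign_castAdd_castAdd (a : Fin n) (c : Fin m) :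
    augDesign n n1 m r d0 d1 d2 (Fin.castAdd n1 a) (Fin.castAdd r c) = d0 a c := by
  simp [augDesign]

@[simp]
theorem augDesign_castAdd_natAdd (a : Fin n) (c : Fin r) :
    augDesign n n1 m r d0 d1 d2 (Fin.castAdd n1 a) (Fin.natAdd m c) = 0 := by
  simp [augDesign]

@[simp]
theorem augDesign_natAdd_castAdd (b : Fin n1) (c : Fin m) :
    augDesign n n1 m r d0 d1 d2 (Fin.natAdd n b) (Fin.castAdd r c) = d1 b c := by
  simp [augDesign]

@[simp]
theorem augDesign_natAdd_natAdd (b : Fin n1) (c : Fin r) :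
    augDesign n n1 m r d0 d1 d2 (Fin.natAdd n b) (Fin.natAdd m c) = d2 b c := by
  simp [augDesign]

theorem augDesign_of_lt_of_le {i : Fin (n + n1)} {k : Fin (m + r)} (hi : (i : ℕ) < n)
    (hk : m ≤ (k : ℕ)) : augDesign n n1 m r d0 d1 d2 i k = 0 := by
  simp [augDesign, hi, Nat.not_lt.mpr hk]

theorem augDesign_mem_of_le_of_le (hd2 : ∀ i k, d2 i k = 1 ∨ d2 i k = 2) {i : Fin (n + n1)}
    {k : Fin (m + r)} (hi : n ≤ (i : ℕ)) (hk : m ≤ (k : ℕ)) :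
    augDesign n n1 m r d0 d1 d2 i k = 1 ∨ augDesign n n1 m r d0 d1 d2 i k = 2 := by
  simp only [augDesign, Nat.not_lt.mpr hi, Nat.not_lt.mpr hk, dite_false]
  exact hd2 _ _

end AugmentedDesign

theorem qfun_add_of_lt {m1 m2 r c : ℕ} (hc : c < r) : qfun m1 m2 r (m1 + m2 + c) = 3 := by
  unfold qfun; split_ifs <;> omega

theorem augDesign_lt_qfun {n n1 m1 m2 r : ℕ} {d0 : Fin n → Fin (m1 + m2) → ℕ}
    {d1 : Fin n1 → Fin (m1 + m2) → ℕ} {d2 : Fin n1 → Fin r → ℕ}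
    (hd0 : IsUType n m1 m2 d0) (hd1 : IsUType n1 m1 m2 d1)
    (hd2 : ∀ i k, d2 i k = 1 ∨ d2 i k = 2) (i : Fin (n + n1)) (k : Fin (m1 + m2 + r)) :
    augDesign n n1 (m1 + m2) r d0 d1 d2 i k < qfun m1 m2 r k := by
  induction i using Fin.addCases with
  | left a =>
    induction k using Fin.addCases with
    | left c => simpa using hd0.lt_qfun r a c
    | right c => simp [qfun_add_of_lt c.isLt]
  | right b =>
    induction k using Fin.addCases with
    | left c => simpa using hd1.lt_qfun r b c
    | right c => rcases hd2 b c with h | h <;> simp [qfun_add_of_lt c.isLt, h]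

section Blocks

variable {n n1 m1 m2 r : ℕ} (d0 : Fin n → Fin (m1 + m2) → ℕ)
  (d1 : Fin n1 → Fin (m1 + m2) → ℕ) (d2 : Fin n1 → Fin r → ℕ)

theorem prod_wdKernel_augDesign_castAdd (a b : Fin n) :
    ∏ k : Fin (m1 + m2 + r), wdKernel (qfun m1 m2 r k)
        (augDesign n n1 (m1 + m2) r d0 d1 d2 (Fin.castAdd n1 a) k)
        (augDesign n n1 (m1 + m2) r d0 d1 d2 (Fin.castAdd n1 b) k) =
      ((3 : ℝ) / 2) ^ r * ∏ k : Fin (m1 + m2), wdKernel (qfun m1 m2 0 k) (d0 a k) (d0 b k) := by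
  rw [Fin.prod_univ_add, mul_comm]
  simp [qfun_eq_of_lt _ r 0, div_pow]

theorem prod_wdKernel_augDesign_of_lt_of_le (hd0 : IsUType n m1 m2 d0)
    (hd1 : IsUType n1 m1 m2 d1) (hd2 : ∀ i k, d2 i k = 1 ∨ d2 i k = 2) {i j : Fin (n + n1)}
    (hi : (i : ℕ) < n) (hj : n ≤ (j : ℕ)) :
    ∏ k : Fin (m1 + m2 + r), wdKernel (qfun m1 m2 r k)
        (augDesign n n1 (m1 + m2) r d0 d1 d2 i k) (augDesign n n1 (m1 + m2) r d0 d1 d2 j k) =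
      ((5 : ℝ) / 4) ^ m1 * ((23 : ℝ) / 18) ^ (m2 + r) *
        (((6 : ℝ) / 5) ^ Fco m1 (augDesign n n1 (m1 + m2) r d0 d1 d2) i j *
          ((27 : ℝ) / 23) ^ Vco m1 m2 (augDesign n n1 (m1 + m2) r d0 d1 d2) i j) := by
  have hTco : Tco (m1 + m2) (augDesign n n1 (m1 + m2) r d0 d1 d2) i j = 0 := by
    refine card_eq_zero.2 (filter_eq_empty_iff.2 fun k _ hk => ?_)
    rw [augDesign_of_lt_of_le d0 d1 d2 hi hk.1] at hk
    omega
  have hdisagree : ∀ k : Fin (m1 + m2 + r), m1 + m2 ≤ (k : ℕ) →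
      augDesign n n1 (m1 + m2) r d0 d1 d2 i k ≠ augDesign n n1 (m1 + m2) r d0 d1 d2 j k := by
    intro k hk heq
    have := augDesign_mem_of_le_of_le d0 d1 d2 hd2 hj hk
    rw [← heq, augDesign_of_lt_of_le d0 d1 d2 hi hk] at this
    omega
  rw [prod_wdKernel_qfun _ (augDesign_lt_qfun hd0 hd1 hd2)
    (fun k hk heq => absurd heq (hdisagree k hk)), hTco, add_zero]

theorem prod_wdKernel_augDesign_of_le (hd0 : IsUType n m1 m2 d0)
    (hd1 : IsUType n1 m1 m2 d1) (hd2 : ∀ i k, d2 i k = 1 ∨ d2 i k = 2) {i j : Fin (n + n1)}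
    (hi : n ≤ (i : ℕ)) :
    ∏ k : Fin (m1 + m2 + r), wdKernel (qfun m1 m2 r k)
        (augDesign n n1 (m1 + m2) r d0 d1 d2 i k) (augDesign n n1 (m1 + m2) r d0 d1 d2 j k) =
      ((5 : ℝ) / 4) ^ m1 * ((23 : ℝ) / 18) ^ (m2 + r) *
        (((6 : ℝ) / 5) ^ Fco m1 (augDesign n n1 (m1 + m2) r d0 d1 d2) i j *
          ((27 : ℝ) / 23) ^ (Vco m1 m2 (augDesign n n1 (m1 + m2) r d0 d1 d2) i j +
            Tco (m1 + m2) (augDesign n n1 (m1 + m2) r d0 d1 d2) i j)) :=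
  prod_wdKernel_qfun _ (augDesign_lt_qfun hd0 hd1 hd2)
    (fun _ hk _ => augDesign_mem_of_le_of_le d0 d1 d2 hd2 hi hk)

end Blocks

theorem paper_stmt_11_general (n n1 m1 m2 r : ℕ)
    (d0 : Fin n → Fin (m1 + m2) → ℕ) (d1 : Fin n1 → Fin (m1 + m2) → ℕ)
    (d2 : Fin n1 → Fin r → ℕ)
    (hd0 : IsUType n m1 m2 d0) (hd1 : IsUType n1 m1 m2 d1)
    (hd2 : ∀ i k, d2 i k = 1 ∨ d2 i k = 2) :
    WD (fun k : Fin (m1 + m2 + r) => qfun m1 m2 r (k : ℕ)) (augDesign n n1 (m1 + m2) r d0 d1 d2) =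
      Cconst n n1 (m1 + m2) r + ((n : ℝ) ^ 2 / ((n : ℝ) + n1) ^ 2) * ((3 : ℝ) / 2) ^ r * (WD (fun k : Fin (m1 + m2) => qfun m1 m2 0 (k : ℕ)) d0)
      + (1 / ((n : ℝ) + n1) ^ 2) * ((5 : ℝ) / 4) ^ m1 * ((23 : ℝ) / 18) ^ (m2 + r) *
        ((∑ i : Fin (n + n1), ∑ j : Fin (n + n1),
            if n ≤ (i : ℕ) ∧ n ≤ (j : ℕ) ∧ i ≠ j then
              ((6 : ℝ) / 5) ^ Fco m1 (augDesign n n1 (m1 + m2) r d0 d1 d2) i j *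
                ((27 : ℝ) / 23) ^ (Vco m1 m2 (augDesign n n1 (m1 + m2) r d0 d1 d2) i j + Tco (m1 + m2) (augDesign n n1 (m1 + m2) r d0 d1 d2) i j)
            else 0)
         + 2 * ∑ i : Fin (n + n1), ∑ j : Fin (n + n1),
            if (i : ℕ) < n ∧ n ≤ (j : ℕ) then
              ((6 : ℝ) / 5) ^ Fco m1 (augDesign n n1 (m1 + m2) r d0 d1 d2) i j * ((27 : ℝ) / 23) ^ Vco m1 m2 (augDesign n n1 (m1 + m2) r d0 d1 d2) i j
            else 0) := by
  set D := augDesign n n1 (m1 + m2) r d0 d1 d2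
  have hinit : ∑ a : Fin n, ∑ b : Fin n, ∏ k : Fin (m1 + m2 + r),
      wdKernel (qfun m1 m2 r k) (D (Fin.castAdd n1 a) k) (D (Fin.castAdd n1 b) k) =
      ((3 : ℝ) / 2) ^ r * ((n : ℝ) ^ 2 *
        (WD (fun k : Fin (m1 + m2) => qfun m1 m2 0 (k : ℕ)) d0 + ((4 : ℝ) / 3) ^ (m1 + m2))) := by
    simp only [D, prod_wdKernel_augDesign_castAdd, ← mul_sum, sum_sum_prod_wdKernel]
  rw [WD_eq_sum_prod, sum_sum_fin_add_of_symm
      (fun i j => ∏ k : Fin (m1 + m2 + r), wdKernel (qfun m1 m2 r k) (D i k) (D j k))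
      fun i j => prod_congr rfl fun k _ => wdKernel_comm _ _ _,
    hinit,
    sum_sum_ite_eq_mul _ _ fun i j h => prod_wdKernel_augDesign_of_le d0 d1 d2 hd0 hd1 hd2 h.1,
    sum_sum_ite_eq_mul _ _ fun i j h =>
      prod_wdKernel_augDesign_of_lt_of_le d0 d1 d2 hd0 hd1 hd2 h.1 h.2]
  simp only [wdKernel_self, prod_const, card_univ, Fintype.card_fin, sum_const, nsmul_eq_mul,
    Cconst]
  push_cast
  ring

theorem paper_stmt_11 (n n1 m1 m2 r : ℕ) (hn : 1 ≤ n) (hn1 : 1 ≤ n1)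
    (hm : 1 ≤ m1 + m2)
    (d0 : Fin n → Fin (m1 + m2) → ℕ) (d1 : Fin n1 → Fin (m1 + m2) → ℕ)
    (d2 : Fin n1 → Fin r → ℕ)
    (hd0 : IsUType n m1 m2 d0) (hd1 : IsUType n1 m1 m2 d1)
    (hd2 : ∀ i k, d2 i k = 1 ∨ d2 i k = 2) :
    WD (fun k : Fin (m1 + m2 + r) => qfun m1 m2 r (k : ℕ)) (augDesign n n1 (m1 + m2) r d0 d1 d2) =
      Cconst n n1 (m1 + m2) r + ((n : ℝ) ^ 2 / ((n : ℝ) + n1) ^ 2) * ((3 : ℝ) / 2) ^ r * (WD (fun k : Fin (m1 + m2) => qfun m1 m2 0 (k : ℕ)) d0)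
      + (1 / ((n : ℝ) + n1) ^ 2) * ((5 : ℝ) / 4) ^ m1 * ((23 : ℝ) / 18) ^ (m2 + r) *
        ((∑ i : Fin (n + n1), ∑ j : Fin (n + n1),
            if n ≤ (i : ℕ) ∧ n ≤ (j : ℕ) ∧ i ≠ j then
              ((6 : ℝ) / 5) ^ Fco m1 (augDesign n n1 (m1 + m2) r d0 d1 d2) i j *
                ((27 : ℝ) / 23) ^ (Vco m1 m2 (augDesign n n1 (m1 + m2) r d0 d1 d2) i j + Tco (m1 + m2) (augDesign n n1 (m1 + m2) r d0 d1 d2) i j)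
            else 0)
         + 2 * ∑ i : Fin (n + n1), ∑ j : Fin (n + n1),
            if (i : ℕ) < n ∧ n ≤ (j : ℕ) then
              ((6 : ℝ) / 5) ^ Fco m1 (augDesign n n1 (m1 + m2) r d0 d1 d2) i j * ((27 : ℝ) / 23) ^ Vco m1 m2 (augDesign n n1 (m1 + m2) r d0 d1 d2) i j
            else 0) :=
  paper_stmt_11_general n n1 m1 m2 r d0 d1 d2 hd0 hd1 hd2

end CAUD

end
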